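/- arXiv:2604.13862 — 2 statements merged into one kernel-verified Lean document; each statement's English description precedes it below -/
import Mathlib

section
/- With P' ⊆ ℝ^d defined as in the nullspace projection and an axis-aligned interval [c − r, c + r] ⊇ P' (componentwise, with r ≥ 0), define the zonotope 𝒵 = {(ξ_p + Â^⊥ c) + Â^⊥ diag(r) β : ‖β‖_∞ ≤ 1}. Then every ξ ∈ ℝ^γ with Âξ = b̂ and ‖ξ‖_∞ ≤ 1 belongs to 𝒵. -/
/-!
A feasible `ξ` differs from the particular solution `ξp` by an element of the kernel of `Â`,
so `ξ = ξp + Â^⊥ x` for some `x`, and this `x` lies in `P'`, hence in the box: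
`|x i - c i| ≤ r i`. Rescaling, `β i = (x i - c i) / r i` has `|β i| ≤ 1` and
`diag(r) β = x - c`; the coordinates with `r i = 0` are harmless, because there
`x i = c i` and Lean's `y / 0 = 0` gives `β i = 0`.
-/

open Matrix

theorem exists_eq_add_mulVec_of_mulVec_eq {R m n k : Type*} [Ring R] [Fintype n] [Fintype k]
    {A : Matrix m n R} {N : Matrix n k R} {b : m → R} {ξ ξp : n → R}
    (hker : ∀ v, A *ᵥ v = 0 → ∃ x, v = N *ᵥ x) (hξp : A *ᵥ ξp = b) (hξ : A *ᵥ ξ = b) :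
    ∃ x, ξ = ξp + N *ᵥ x := by
  obtain ⟨x, hx⟩ := hker (ξ - ξp) (by rw [mulVec_sub, hξ, hξp, sub_self])
  exact ⟨x, by rw [← hx, add_sub_cancel]⟩

theorem exists_diagonal_mulVec_eq_of_abs_le {K ι : Type*} [Field K] [LinearOrder K]
    [IsStrictOrderedRing K] [Fintype ι] [DecidableEq ι] {r y : ι → K} (hy : ∀ i, |y i| ≤ r i) :
    ∃ β : ι → K, (∀ i, |β i| ≤ 1) ∧ diagonal r *ᵥ β = y := by
  refine ⟨fun i => y i / r i, fun i => ?_, funext fun i => ?_⟩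
  · rw [abs_div, abs_of_nonneg ((abs_nonneg _).trans (hy i))]
    exact div_le_one_of_le₀ (hy i) ((abs_nonneg _).trans (hy i))
  · rw [mulVec_diagonal]
    rcases eq_or_ne (r i) 0 with hri | hri
    · have hyi : y i = 0 := abs_nonpos_iff.mp (hri ▸ hy i)
      rw [hri, hyi, zero_mul]
    · exact mul_div_cancel₀ (y i) hri

theorem interval_lift_general {q γ d : ℕ}
    (Ahat : Matrix (Fin q) (Fin γ) ℝ) (bhat : Fin q → ℝ)
    (ξp : Fin γ → ℝ) (Aperp : Matrix (Fin γ) (Fin d) ℝ)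
    (c r : Fin d → ℝ)
    (hξp : Ahat.mulVec ξp = bhat)
    (hker : ∀ v : Fin γ → ℝ, Ahat.mulVec v = 0 ↔ ∃ x : Fin d → ℝ, v = Aperp.mulVec x)
    -- the box [c − r, c + r] contains the projected polytope P'
    (hbox : ∀ x : Fin d → ℝ, (∀ i, |(ξp + Aperp.mulVec x) i| ≤ 1) →
        ∀ i, |x i - c i| ≤ r i) :
    ∀ ξ : Fin γ → ℝ, Ahat.mulVec ξ = bhat → (∀ i, |ξ i| ≤ 1) →
      ∃ βv : Fin d → ℝ, (∀ i, |βv i| ≤ 1) ∧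
        ξ = (ξp + Aperp.mulVec c) + (Aperp * Matrix.diagonal r).mulVec βv := by
  intro ξ hξ hξ_le
  obtain ⟨x, rfl⟩ := exists_eq_add_mulVec_of_mulVec_eq (fun v => (hker v).mp) hξp hξ
  obtain ⟨β, hβ_le, hβ⟩ := exists_diagonal_mulVec_eq_of_abs_le (y := x - c) (hbox x hξ_le)
  refine ⟨β, hβ_le, ?_⟩
  rw [← mulVec_mulVec, hβ, mulVec_sub, add_assoc, add_sub_cancel]

/-- Lifting an interval over-approximation of the projected polytope back to
coefficient space: every feasible `ξ` (with `Âξ = b̂`, `‖ξ‖_∞ ≤ 1`) lies in the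
zonotope `𝒵 = ⟨ξ_p + Â^⊥ c, Â^⊥ diag(r)⟩`. -/
theorem interval_lift {q γ d : ℕ}
    (Ahat : Matrix (Fin q) (Fin γ) ℝ) (bhat : Fin q → ℝ)
    (ξp : Fin γ → ℝ) (Aperp : Matrix (Fin γ) (Fin d) ℝ)
    (c r : Fin d → ℝ)
    (hξp : Ahat.mulVec ξp = bhat)
    (hker : ∀ v : Fin γ → ℝ, Ahat.mulVec v = 0 ↔ ∃ x : Fin d → ℝ, v = Aperp.mulVec x)
    (hr : ∀ i, 0 ≤ r i)
    -- the box [c − r, c + r] contains the projected polytope P'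
    (hbox : ∀ x : Fin d → ℝ, (∀ i, |(ξp + Aperp.mulVec x) i| ≤ 1) →
        ∀ i, |x i - c i| ≤ r i) :
    ∀ ξ : Fin γ → ℝ, Ahat.mulVec ξ = bhat → (∀ i, |ξ i| ≤ 1) →
      ∃ βv : Fin d → ℝ, (∀ i, |βv i| ≤ 1) ∧
        ξ = (ξp + Aperp.mulVec c) + (Aperp * Matrix.diagonal r).mulVec βv :=
  interval_lift_general Ahat bhat ξp Aperp c r hξp hker hbox
end

section
/- Let C_ℳ ∈ ℝ^{m×n} and G_ℳ^{(1)},…,G_ℳ^{(γ)} ∈ ℝ^{m×n} with γ_ℳ^{(j)} = ‖G_ℳ^{(j)}‖₂, and suppose C_ℳ has full row rank with SVD C_ℳ = U Σ Vᵀ. Let μ_ℳ^{(j)} = ‖Uᵀ G_ℳ^{(j)} V_⊥‖₂ and assume Σ_j γ_ℳ^{(j)} < σ_min(C_ℳ). Then for every η ∈ [−1,1]^γ, writing Ĉ = C_ℳ + Σ_j η^{(j)} G_ℳ^{(j)} and letting V̂ span the top-m right singular subspace of Ĉ, ‖sin Θ(V, V̂)‖₂ ≤ (Σ_{j=1}^γ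 μ_ℳ^{(j)}) / (σ_min(C_ℳ) − Σ_{j=1}^γ γ_ℳ^{(j)}). -/
open Matrix

/-- Spectral norm (ℓ²-operator norm) of a real matrix. -/
noncomputable def specNorm {m n : ℕ} (M : Matrix (Fin m) (Fin n) ℝ) : ℝ :=
  ‖LinearMap.toContinuousLinearMap (Matrix.toEuclideanLin M)‖

/-- Eigenvalues of a Hermitian matrix listed in decreasing order. -/
noncomputable def eigsDesc {n : ℕ} (A : Matrix (Fin n) (Fin n) ℝ) (hA : A.IsHermitian) :
    Fin n → ℝ :=
  fun i => (hA.eigenvalues ∘ Tuple.sort hA.eigenvalues) i.rev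

/-- The `i`-th largest singular value of a real matrix. -/
noncomputable def singularValue {m n : ℕ} (M : Matrix (Fin m) (Fin n) ℝ)
    (i : Fin (min m n)) : ℝ :=
  Real.sqrt (eigsDesc (Mᴴ * M) (Matrix.isHermitian_conjTranspose_mul_self M)
    ⟨i.1, lt_of_lt_of_le i.2 (Nat.min_le_right m n)⟩)

/-- The smallest singular value of a real matrix. -/
noncomputable def sigmaMin {m n : ℕ} (M : Matrix (Fin m) (Fin n) ℝ) : ℝ :=
  ⨅ i : Fin (min m n), singularValue M i

/-!
The eigenvalues of `C_ℳᵀ C_ℳ` are the `d i ^ 2` of the SVD `C_ℳ = U (diagonal d) Vᵀ` together with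
`n - m` zeros (compare the characteristic polynomials of `C_ℳᵀ C_ℳ` and `C_ℳ C_ℳᵀ`), so
`σ_min(C_ℳ) ≤ |d i|` for every `i`. Testing `Ĉᵀ` on a left singular vector of `Ĉ = C_ℳ + Z` gives
Weyl's bound `σ_min(C_ℳ) - ‖Z‖ ≤ |d̂ i|`. Since `C_ℳ V⊥ = 0`, transposing `Ĉ = Û Ŝ V̂ᵀ` yields
`V⊥ᵀ V̂ Ŝ = (Z V⊥)ᵀ Û`, so `‖V⊥ᵀ V̂‖ ≤ ‖Uᵀ Z V⊥‖ / min |d̂ i|`; the triangle inequality over the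
generators finishes.
-/

open scoped Matrix.Norms.L2Operator
open Polynomial
open scoped Finset

lemma specNorm_eq_norm {m n : ℕ} (M : Matrix (Fin m) (Fin n) ℝ) : specNorm M = ‖M‖ := rfl

section Norms

variable {k m n : ℕ}

lemma norm_transpose_eq (A : Matrix (Fin m) (Fin n) ℝ) : ‖Aᵀ‖ = ‖A‖ := by
  rw [← conjTranspose_eq_transpose_of_trivial]
  exact l2_opNorm_conjTranspose A

lemma norm_mul_eq_of_transpose_mul_self_eq_one {A : Matrix (Fin m) (Fin n) ℝ} (hA : Aᵀ * A = 1)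
    (B : Matrix (Fin n) (Fin k) ℝ) : ‖A * B‖ = ‖B‖ := by
  have hsq : ‖A * B‖ * ‖A * B‖ = ‖B‖ * ‖B‖ := by
    rw [← conjTranspose_eq_transpose_of_trivial] at hA
    rw [← l2_opNorm_conjTranspose_mul_self, ← l2_opNorm_conjTranspose_mul_self, conjTranspose_mul,
      Matrix.mul_assoc, ← Matrix.mul_assoc Aᴴ, hA, Matrix.one_mul]
  exact mul_self_inj (norm_nonneg _) (norm_nonneg _) |>.mp hsq

lemma norm_transpose_mul_eq_of_mul_transpose_eq_one {A : Matrix (Fin n) (Fin m) ℝ}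
    (hA : A * Aᵀ = 1) (B : Matrix (Fin n) (Fin k) ℝ) : ‖Aᵀ * B‖ = ‖B‖ :=
  norm_mul_eq_of_transpose_mul_self_eq_one (by rwa [transpose_transpose]) B

lemma norm_sum_smul_le_of_abs_le_one {ι : Type*} [Fintype ι] {η : ι → ℝ} (hη : ∀ j, |η j| ≤ 1)
    (A : ι → Matrix (Fin m) (Fin n) ℝ) : ‖∑ j, η j • A j‖ ≤ ∑ j, ‖A j‖ := by
  refine (norm_sum_le _ _).trans (Finset.sum_le_sum fun j _ => ?_)
  rw [norm_smul, Real.norm_eq_abs]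
  exact mul_le_of_le_one_left (norm_nonneg _) (hη j)

lemma mul_norm_le_norm_diagonal_mul {c : ℝ} {w : Fin m → ℝ} (hw : ∀ i, c ≤ |w i|)
    (B : Matrix (Fin m) (Fin n) ℝ) : c * ‖B‖ ≤ ‖diagonal w * B‖ := by
  rcases le_or_gt c 0 with hc | hc
  · exact (mul_nonpos_of_nonpos_of_nonneg hc (norm_nonneg B)).trans (norm_nonneg _)
  have hw₀ : ∀ i, w i ≠ 0 := fun i h => by linarith [hw i, abs_eq_zero.mpr h]
  have hinv : diagonal w⁻¹ * (diagonal w * B) = B := by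
    simp [← Matrix.mul_assoc, hw₀]
  have hnorm : ‖(diagonal w⁻¹ : Matrix (Fin m) (Fin m) ℝ)‖ ≤ c⁻¹ := by
    rw [l2_opNorm_diagonal]
    refine pi_norm_le_iff_of_nonneg (by positivity) |>.mpr fun i => ?_
    rw [Pi.inv_apply, norm_inv, Real.norm_eq_abs]
    exact inv_anti₀ hc (hw i)
  calc c * ‖B‖ = c * ‖diagonal w⁻¹ * (diagonal w * B)‖ := by rw [hinv]
    _ ≤ c * (c⁻¹ * ‖diagonal w * B‖) := by
        gcongr
        exact (l2_opNorm_mul _ _).trans (by gcongr)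
    _ = ‖diagonal w * B‖ := by field_simp

lemma mul_norm_le_norm_mul_diagonal {c : ℝ} {w : Fin m → ℝ} (hw : ∀ i, c ≤ |w i|)
    (B : Matrix (Fin n) (Fin m) ℝ) : c * ‖B‖ ≤ ‖B * diagonal w‖ := by
  simpa only [← norm_transpose_eq B, ← norm_transpose_eq (B * diagonal w), transpose_mul,
    diagonal_transpose] using mul_norm_le_norm_diagonal_mul hw Bᵀ

end Norms

lemma Tuple.apply_sort_rev_le_of_card_le {α : Type*} [LinearOrder α] {n : ℕ} (f : Fin n → α)
    (c : α) (k : Fin n) (hk : #{i | c < f i} ≤ k) : f (Tuple.sort f k.rev) ≤ c := by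
  by_contra! hlt
  have hmaps : Set.MapsTo (fun j : Fin n => Tuple.sort f j.rev) (Finset.Iic k)
      ({i | c < f i} : Finset (Fin n)) := by
    intro j hj
    simp only [Finset.coe_filter, Finset.mem_univ, true_and, Set.mem_ofPred_eq]
    exact hlt.trans_le (Tuple.monotone_sort f (Fin.rev_le_rev.mpr (Finset.mem_Iic.mp hj)))
  have hinj : Set.InjOn (fun j : Fin n => Tuple.sort f j.rev) (Finset.Iic k) :=
    fun a _ b _ hab => Fin.rev_injective ((Tuple.sort f).injective hab)
  have := Finset.card_le_card_of_injOn _ hmaps hinj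
  rw [Fin.card_Iic] at this
  omega

section SVD

variable {m n : ℕ} {M : Matrix (Fin m) (Fin n) ℝ} {U : Matrix (Fin m) (Fin m) ℝ}
  {V : Matrix (Fin n) (Fin m) ℝ} {d : Fin m → ℝ}

lemma charpoly_conjTranspose_mul_self_of_svd (hmn : m ≤ n) (hM : M = U * diagonal d * Vᵀ)
    (hU : Uᵀ * U = 1) (hV : Vᵀ * V = 1) :
    (Mᴴ * M).charpoly = X ^ (n - m) * ∏ i, (X - C (d i * d i)) := by
  have hMMt : M * Mᴴ = U * (diagonal fun i => d i * d i) * Uᵀ := by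
    rw [conjTranspose_eq_transpose_of_trivial, hM]
    simp only [transpose_mul, transpose_transpose, diagonal_transpose, Matrix.mul_assoc]
    rw [← Matrix.mul_assoc Vᵀ, hV, Matrix.one_mul, ← Matrix.mul_assoc (diagonal d),
      diagonal_mul_diagonal]
  rw [charpoly_mul_comm_of_le _ _ (by simpa using hmn), Fintype.card_fin, Fintype.card_fin, hMMt,
    charpoly_mul_comm, ← Matrix.mul_assoc, hU, Matrix.one_mul, charpoly_diagonal]

lemma eigenvalues_conjTranspose_mul_self_of_svd (hmn : m ≤ n) (hM : M = U * diagonal d * Vᵀ)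
    (hU : Uᵀ * U = 1) (hV : Vᵀ * V = 1) :
    Multiset.map (isHermitian_conjTranspose_mul_self M).eigenvalues Finset.univ.val =
      (n - m) • {0} + Multiset.map (fun i => d i * d i) Finset.univ.val := by
  have hroots := (isHermitian_conjTranspose_mul_self M).roots_charpoly_eq_eigenvalues
  have hne := (Mᴴ * M).charpoly_monic.ne_zero
  rw [charpoly_conjTranspose_mul_self_of_svd hmn hM hU hV] at hroots hne
  rw [roots_mul hne, roots_X_pow, roots_prod _ _ (right_ne_zero_of_mul hne)] at hroots
  simp only [roots_X_sub_C, Multiset.bind_singleton] at hroots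
  exact hroots.symm

lemma sigmaMin_le_abs_of_svd (hmn : m ≤ n) (hM : M = U * diagonal d * Vᵀ) (hU : Uᵀ * U = 1)
    (hV : Vᵀ * V = 1) (i : Fin m) : sigmaMin M ≤ |d i| := by
  have hA := isHermitian_conjTranspose_mul_self M
  have hk : m - 1 < min m n := by have := i.2; omega
  -- Of the eigenvalues `0` (with multiplicity `n - m`) and `d j ^ 2`, only the `d j ^ 2` with
  -- `j ≠ i` can exceed `d i ^ 2`.
  have hcount : #{k | d i * d i < hA.eigenvalues k} ≤ m - 1 := by
    have hgt : #{k | d i * d i < hA.eigenvalues k} =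
        Multiset.countP (d i * d i < ·) (Multiset.map hA.eigenvalues Finset.univ.val) := by
      rw [Multiset.countP_map]; rfl
    rw [hgt, eigenvalues_conjTranspose_mul_self_of_svd hmn hM hU hV, Multiset.countP_add,
      Multiset.countP_nsmul, Multiset.countP_eq_zero.mpr (by simpa using mul_self_nonneg (d i)),
      mul_zero, zero_add, Multiset.countP_map]
    calc Multiset.card (Multiset.filter (fun j => d i * d i < d j * d j) Finset.univ.val)
        = #{j | d i * d i < d j * d j} := rfl
      _ ≤ #(Finset.univ.erase i) := Finset.card_le_card fun j hj => by
          simp only [Finset.mem_filter, Finset.mem_univ, true_and] at hj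
          exact Finset.mem_erase.mpr ⟨fun h => (h ▸ hj).false, Finset.mem_univ j⟩
      _ = m - 1 := by rw [Finset.card_erase_of_mem (Finset.mem_univ i), Finset.card_fin]
  have heig := Tuple.apply_sort_rev_le_of_card_le hA.eigenvalues _
    ⟨m - 1, lt_of_lt_of_le hk (min_le_right m n)⟩ hcount
  calc sigmaMin M ≤ singularValue M ⟨m - 1, hk⟩ :=
        ciInf_le ⟨0, Set.forall_mem_range.mpr fun _ => Real.sqrt_nonneg _⟩ _
    _ ≤ Real.sqrt (d i * d i) := Real.sqrt_le_sqrt heig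
    _ = |d i| := Real.sqrt_mul_self_eq_abs _

end SVD

section Perturbation

variable {k m n : ℕ}

lemma mul_norm_le_norm_transpose_mul_of_svd {M : Matrix (Fin m) (Fin n) ℝ}
    {U : Matrix (Fin m) (Fin m) ℝ} {V : Matrix (Fin n) (Fin m) ℝ} {d : Fin m → ℝ} {c : ℝ}
    (hM : M = U * diagonal d * Vᵀ) (hU : U * Uᵀ = 1) (hV : Vᵀ * V = 1) (hc : ∀ i, c ≤ |d i|)
    (B : Matrix (Fin m) (Fin k) ℝ) : c * ‖B‖ ≤ ‖Mᵀ * B‖ := by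
  have hMt : Mᵀ * B = V * (diagonal d * (Uᵀ * B)) := by
    simp only [hM, transpose_mul, transpose_transpose, diagonal_transpose, Matrix.mul_assoc]
  calc c * ‖B‖ = c * ‖Uᵀ * B‖ := by rw [norm_transpose_mul_eq_of_mul_transpose_eq_one hU]
    _ ≤ ‖diagonal d * (Uᵀ * B)‖ := mul_norm_le_norm_diagonal_mul hc _
    _ = ‖Mᵀ * B‖ := by rw [hMt, norm_mul_eq_of_transpose_mul_self_eq_one hV]

lemma le_abs_add_norm_sub_of_svd {M M' : Matrix (Fin m) (Fin n) ℝ}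
    {U U' : Matrix (Fin m) (Fin m) ℝ} {V V' : Matrix (Fin n) (Fin m) ℝ} {d d' : Fin m → ℝ}
    {c : ℝ} (hM : M = U * diagonal d * Vᵀ) (hU : U * Uᵀ = 1) (hV : Vᵀ * V = 1)
    (hc : ∀ i, c ≤ |d i|) (hM' : M' = U' * diagonal d' * V'ᵀ) (hU' : U'ᵀ * U' = 1)
    (hV' : V'ᵀ * V' = 1) (i : Fin m) : c ≤ |d' i| + ‖M - M'‖ := by
  set X := U' * diagonal (Pi.single i 1)
  have hX : ‖X‖ = 1 := by
    rw [norm_mul_eq_of_transpose_mul_self_eq_one hU', l2_opNorm_diagonal, Pi.norm_single, norm_one]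
  have hM'X : ‖M'ᵀ * X‖ = |d' i| := by
    have : M'ᵀ * X = V' * diagonal (Pi.single i (d' i)) := by
      simp only [X, hM', transpose_mul, transpose_transpose, diagonal_transpose, Matrix.mul_assoc]
      rw [← Matrix.mul_assoc U'ᵀ, hU', Matrix.one_mul, diagonal_mul_diagonal]
      congr 2
      ext j
      by_cases h : j = i <;> simp [h]
    rw [this, norm_mul_eq_of_transpose_mul_self_eq_one hV', l2_opNorm_diagonal, Pi.norm_single,
      Real.norm_eq_abs]
  calc c = c * ‖X‖ := by rw [hX, mul_one]
    _ ≤ ‖Mᵀ * X‖ := mul_norm_le_norm_transpose_mul_of_svd hM hU hV hc X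
    _ = ‖M'ᵀ * X + (M - M')ᵀ * X‖ := by rw [← Matrix.add_mul, ← transpose_add, add_sub_cancel]
    _ ≤ ‖M'ᵀ * X‖ + ‖(M - M')ᵀ‖ * ‖X‖ :=
        (norm_add_le _ _).trans (by gcongr; exact l2_opNorm_mul _ _)
    _ = |d' i| + ‖M - M'‖ := by rw [hM'X, hX, mul_one, norm_transpose_eq]

lemma mul_norm_transpose_mul_le_of_svd {M Z : Matrix (Fin m) (Fin n) ℝ}
    {U U' : Matrix (Fin m) (Fin m) ℝ} {V' : Matrix (Fin n) (Fin m) ℝ}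
    {Vperp : Matrix (Fin n) (Fin k) ℝ} {d' : Fin m → ℝ} {c : ℝ} (hMVperp : M * Vperp = 0)
    (hU : U * Uᵀ = 1) (hM' : M + Z = U' * diagonal d' * V'ᵀ) (hU' : U'ᵀ * U' = 1)
    (hc : ∀ i, c ≤ |d' i|) : c * ‖Vperpᵀ * V'‖ ≤ ‖Uᵀ * Z * Vperp‖ := by
  have hkey : Vperpᵀ * V' * diagonal d' = (U'ᵀ * (Z * Vperp))ᵀ := by
    have h := congrArg (fun A => (A * Vperp)ᵀ * U') hM'
    simp only [Matrix.add_mul, hMVperp, zero_add, transpose_mul, transpose_transpose,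
      diagonal_transpose, Matrix.mul_assoc] at h
    rw [hU', Matrix.mul_one] at h
    simp only [transpose_mul, transpose_transpose, Matrix.mul_assoc, h]
  have hU'o : U' * U'ᵀ = 1 := mul_eq_one_comm.mp hU'
  calc c * ‖Vperpᵀ * V'‖ ≤ ‖Vperpᵀ * V' * diagonal d'‖ := mul_norm_le_norm_mul_diagonal hc _
    _ = ‖Uᵀ * Z * Vperp‖ := by
      rw [hkey, norm_transpose_eq, norm_transpose_mul_eq_of_mul_transpose_eq_one hU'o,
        Matrix.mul_assoc, norm_transpose_mul_eq_of_mul_transpose_eq_one hU]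

end Perturbation

theorem nmz_worst_case_bound_general {m n γ : ℕ}
    (CM : Matrix (Fin m) (Fin n) ℝ) (G : Fin γ → Matrix (Fin m) (Fin n) ℝ)
    (U S : Matrix (Fin m) (Fin m) ℝ) (V : Matrix (Fin n) (Fin m) ℝ)
    (Vperp : Matrix (Fin n) (Fin (n - m)) ℝ)
    -- SVD of the full-row-rank center C_ℳ
    (hCM : CM = U * S * Vᵀ)
    (hU : Uᵀ * U = 1) (hUo : U * Uᵀ = 1) (hV : Vᵀ * V = 1)
    (hS : ∃ dvec : Fin m → ℝ, S = Matrix.diagonal dvec)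
    -- V⊥ completes V to an orthonormal basis of ℝⁿ
    (hVVp : Vᵀ * Vperp = 0)
    -- generator budget assumption Σⱼ γ_ℳ⁽ʲ⁾ < σ_min(C_ℳ)
    (hbudget : ∑ j, specNorm (G j) < sigmaMin CM) :
    ∀ η : Fin γ → ℝ, (∀ j, |η j| ≤ 1) →
      ∀ (Uhat Shat : Matrix (Fin m) (Fin m) ℝ) (Vhat : Matrix (Fin n) (Fin m) ℝ),
        CM + ∑ j, η j • G j = Uhat * Shat * Vhatᵀ →
        Uhatᵀ * Uhat = 1 → Vhatᵀ * Vhat = 1 →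
        (∃ dvec : Fin m → ℝ, Shat = Matrix.diagonal dvec ∧
            (∀ i, 0 ≤ dvec i) ∧ Antitone dvec) →
        specNorm (Vperpᵀ * Vhat) ≤
          (∑ j, specNorm (Uᵀ * G j * Vperp)) /
            (sigmaMin CM - ∑ j, specNorm (G j)) := by
  rintro η hη Uhat Shat Vhat hChat hUhat hVhat ⟨dh, hShat, -, -⟩
  obtain ⟨d, rfl⟩ := hS
  subst hShat
  simp only [specNorm_eq_norm] at hbudget ⊢
  have hmn : m ≤ n := by simpa [hV] using (rank_mul_le_right Vᵀ V).trans (rank_le_height V)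
  set Z := ∑ j, η j • G j
  have hZ : ‖Z‖ ≤ ∑ j, ‖G j‖ := norm_sum_smul_le_of_abs_le_one hη G
  have hμ : ‖Uᵀ * Z * Vperp‖ ≤ ∑ j, ‖Uᵀ * G j * Vperp‖ := by
    simpa [Z, Matrix.mul_sum, Matrix.sum_mul] using
      norm_sum_smul_le_of_abs_le_one hη fun j => Uᵀ * G j * Vperp
  have hgap : ∀ i, sigmaMin CM - ∑ j, ‖G j‖ ≤ |dh i| := fun i => by
    have := le_abs_add_norm_sub_of_svd hCM hUo hV (sigmaMin_le_abs_of_svd hmn hCM hU hV) hChat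
      hUhat hVhat i
    rw [sub_add_cancel_left, norm_neg] at this
    linarith
  have hCMVperp : CM * Vperp = 0 := by rw [hCM, Matrix.mul_assoc, hVVp, Matrix.mul_zero]
  rw [le_div_iff₀ (by linarith), mul_comm]
  exact (mul_norm_transpose_mul_le_of_svd hCMVperp hUo hChat hUhat hgap).trans hμ

/-- Worst-case Cai–Zhang bound for the nullspace matrix zonotope: for every
`η ∈ [−1,1]^γ` and every SVD `Ĉ = Û Ŝ V̂ᵀ` of the perturbed matrix
`Ĉ = C_ℳ + Σⱼ η⁽ʲ⁾ G_ℳ⁽ʲ⁾`,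
`‖sin Θ(V, V̂)‖₂ = ‖V⊥ᵀ V̂‖₂ ≤ (Σⱼ μ_ℳ⁽ʲ⁾)/(σ_min(C_ℳ) − Σⱼ γ_ℳ⁽ʲ⁾)`. -/
theorem nmz_worst_case_bound {m n γ : ℕ}
    (CM : Matrix (Fin m) (Fin n) ℝ) (G : Fin γ → Matrix (Fin m) (Fin n) ℝ)
    (U S : Matrix (Fin m) (Fin m) ℝ) (V : Matrix (Fin n) (Fin m) ℝ)
    (Vperp : Matrix (Fin n) (Fin (n - m)) ℝ)
    -- SVD of the full-row-rank center C_ℳ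
    (hCM : CM = U * S * Vᵀ)
    (hU : Uᵀ * U = 1) (hUo : U * Uᵀ = 1) (hV : Vᵀ * V = 1)
    (hS : ∃ dvec : Fin m → ℝ, S = Matrix.diagonal dvec)
    (hrank : CM.rank = m)
    -- V⊥ completes V to an orthonormal basis of ℝⁿ
    (hVVp : Vᵀ * Vperp = 0) (hVp : Vperpᵀ * Vperp = 1)
    (hcomplete : V * Vᵀ + Vperp * Vperpᵀ = 1)
    -- generator budget assumption Σⱼ γ_ℳ⁽ʲ⁾ < σ_min(C_ℳ)
    (hbudget : ∑ j, specNorm (G j) < sigmaMin CM) :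
    ∀ η : Fin γ → ℝ, (∀ j, |η j| ≤ 1) →
      ∀ (Uhat Shat : Matrix (Fin m) (Fin m) ℝ) (Vhat : Matrix (Fin n) (Fin m) ℝ),
        CM + ∑ j, η j • G j = Uhat * Shat * Vhatᵀ →
        Uhatᵀ * Uhat = 1 → Vhatᵀ * Vhat = 1 →
        (∃ dvec : Fin m → ℝ, Shat = Matrix.diagonal dvec ∧
            (∀ i, 0 ≤ dvec i) ∧ Antitone dvec) →
        specNorm (Vperpᵀ * Vhat) ≤
          (∑ j, specNorm (Uᵀ * G j * Vperp)) /
            (sigmaMin CM - ∑ j, specNorm (G j)) :=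
  nmz_worst_case_bound_general CM G U S V Vperp hCM hU hUo hV hS hVVp hbudget
end
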